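/- Let Γ be a ℤ^d-periodic graph with fundamental domain W = [n]. For every permutation σ of [n], the generic support of σD(z,λ) is contained in the generic support of D(z,λ); that is, A(σD(z,λ)) ⊆ A(D(z,λ)) ⊂ ℤ^{d+1}. -/

import Mathlib

open scoped Classical Polynomial

noncomputable section

/-- A `ℤ^d`-periodic graph (with no self-loops or multiple edges), given by a
fundamental domain `[n] = Fin n` together with, for each pair `i j` of vertices
of the fundamental domain, the finite set `edges i j ⊆ ℤ^d` of those `a` such
that there is an edge between the vertex `(i,0)` and the vertex `(j,a)`.
The full vertex set is `Fin n × ℤ^d`, with `ℤ^d` acting by translation on the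
second coordinate. -/
structure PeriodicGraph (d n : ℕ) where
  edges : Fin n → Fin n → Finset (Fin d → ℤ)
  symm : ∀ i j a, a ∈ edges i j ↔ -a ∈ edges j i
  no_loop : ∀ i, (0 : Fin d → ℤ) ∉ edges i i

namespace PeriodicGraph

variable {d n : ℕ}

/-- Vertices of the periodic graph: pairs `(i, a)` with `i` in the fundamental
domain and `a ∈ ℤ^d`. -/
abbrev Vertex (d n : ℕ) := Fin n × (Fin d → ℤ)

/-- Adjacency in the full `ℤ^d`-periodic graph. -/
def Adj (G : PeriodicGraph d n) (u v : Vertex d n) : Prop :=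
  (v.2 - u.2) ∈ G.edges u.1 v.1

/-- The periodic graph is connected. -/
def Connected (G : PeriodicGraph d n) : Prop :=
  ∀ u v : Vertex d n, Relation.ReflTransGen G.Adj u v

/-- Directed edges (up to translation): triples `(i, j, a)` so that there is an
edge from `(i,0)` to `(j,a)`. -/
def DirEdge (G : PeriodicGraph d n) : Type :=
  {x : Fin n × Fin n × (Fin d → ℤ) // x.2.2 ∈ G.edges x.1 x.2.1}

/-- Reversal of a directed edge. -/
def flipEdge (G : PeriodicGraph d n) (x : G.DirEdge) : G.DirEdge :=
  ⟨(x.1.2.1, x.1.1, -x.1.2.2), (G.symm _ _ _).mp x.2⟩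

lemma flipEdge_flipEdge (G : PeriodicGraph d n) (x : G.DirEdge) :
    G.flipEdge (G.flipEdge x) = x := by
  obtain ⟨⟨i, j, a⟩, hx⟩ := x
  simp [flipEdge]
  rfl

/-- The setoid identifying a directed edge with its reversal; an (undirected)
edge label variable `e_{(i,j),a} = e_{(j,i),-a}` corresponds to an equivalence
class. -/
def edgeSetoid (G : PeriodicGraph d n) : Setoid G.DirEdge where
  r x y := y = x ∨ y = G.flipEdge x
  iseqv := by
    constructor
    · intro x; exact Or.inl rfl
    · rintro x y (rfl | rfl)
      · exact Or.inl rfl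
      · right; rw [flipEdge_flipEdge]
    · rintro x y z (rfl | rfl) h
      · exact h
      · rcases h with rfl | rfl
        · exact Or.inr rfl
        · left; rw [flipEdge_flipEdge]

/-- Edge-label variables: unordered edges of the quotient graph. -/
abbrev EdgeVar (G : PeriodicGraph d n) : Type := Quotient G.edgeSetoid

/-- The index type for the variables of the labeling space `ℂ^{V,E}`:
one potential variable `v_i` for each vertex `i` of the fundamental domain,
and one edge-label variable for each (undirected) edge of the quotient. -/
abbrev VarIdx (G : PeriodicGraph d n) : Type := Fin n ⊕ G.EdgeVar

/-- The labeling space `ℂ^{V,E}`. -/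
abbrev Labeling (G : PeriodicGraph d n) : Type := G.VarIdx → ℂ

/-- The edge variable attached to a directed edge. -/
def edgeVar (G : PeriodicGraph d n) (i j : Fin n) (a : Fin d → ℤ)
    (h : a ∈ G.edges i j) : G.VarIdx :=
  Sum.inr (Quotient.mk G.edgeSetoid ⟨(i, j, a), h⟩)

/-- The ring `ℂ[z^{±1}]` of complex Laurent polynomials in `z = (z_1,…,z_d)`. -/
abbrev LaurentC (d : ℕ) : Type := AddMonoidAlgebra ℂ (Fin d → ℤ)

/-- The universal coefficient ring `ℂ[v,e]`: polynomials in the potential and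
edge-label variables. -/
abbrev CoeffRing (G : PeriodicGraph d n) : Type := MvPolynomial G.VarIdx ℂ

/-- Laurent polynomials in `z` with coefficients in `ℂ[v,e]`. -/
abbrev LaurentU (G : PeriodicGraph d n) : Type :=
  AddMonoidAlgebra G.CoeffRing (Fin d → ℤ)

/-- The Floquet matrix `L(z)` at a fixed labeling `x ∈ ℂ^{V,E}`:
`L(z)_{i,j} = δ_{ij} v_i + ∑_{a : (i,j+a) ∈ ℰ} e_{(i,j),a} z^a`. -/
def floquet (G : PeriodicGraph d n) (x : G.Labeling) :
    Matrix (Fin n) (Fin n) (LaurentC d) := fun i j =>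
  (if i = j then AddMonoidAlgebra.single 0 (x (Sum.inl i)) else 0) +
    ∑ a ∈ (G.edges i j).attach,
      AddMonoidAlgebra.single a.1 (x (G.edgeVar i j a.1 a.2))

/-- The universal Floquet matrix `L(z)`, with the potentials and edge labels
treated as indeterminates. -/
def floquetU (G : PeriodicGraph d n) :
    Matrix (Fin n) (Fin n) G.LaurentU := fun i j =>
  (if i = j then AddMonoidAlgebra.single 0 (MvPolynomial.X (Sum.inl i)) else 0) +
    ∑ a ∈ (G.edges i j).attach,
      AddMonoidAlgebra.single a.1 (MvPolynomial.X (G.edgeVar i j a.1 a.2))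

/-- The matrix `L(z) - λ I` at a fixed labeling, as a matrix of polynomials in
`λ` over `ℂ[z^{±1}]`. -/
def dispMat (G : PeriodicGraph d n) (x : G.Labeling) :
    Matrix (Fin n) (Fin n) (Polynomial (LaurentC d)) := fun i j =>
  Polynomial.C (G.floquet x i j) - if i = j then Polynomial.X else 0

/-- The universal matrix `L(z) - λ I`. -/
def dispMatU (G : PeriodicGraph d n) :
    Matrix (Fin n) (Fin n) (Polynomial G.LaurentU) := fun i j =>
  Polynomial.C (G.floquetU i j) - if i = j then Polynomial.X else 0

/-- The dispersion polynomial `D(z,λ) = det (L(z) - λ I)` at a fixed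
labeling, an element of `ℂ[z^{±1}][λ]`. -/
def disp (G : PeriodicGraph d n) (x : G.Labeling) : Polynomial (LaurentC d) :=
  (G.dispMat x).det

/-- The universal dispersion polynomial `D(v,e,z,λ) = det (L(z) - λ I)`,
an element of `ℂ[v,e][z^{±1}][λ]`. -/
def dispU (G : PeriodicGraph d n) : Polynomial G.LaurentU :=
  G.dispMatU.det

/-- `σD(z,λ) = ∏ i, (L(z) - λI)_{i, σ(i)}` at a fixed labeling. -/
def permProd (G : PeriodicGraph d n) (x : G.Labeling) (σ : Equiv.Perm (Fin n)) :
    Polynomial (LaurentC d) :=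
  ∏ i, G.dispMat x i (σ i)

/-- The universal `σD(v,e,z,λ) = ∏ i, (L(z) - λI)_{i, σ(i)}`. -/
def permProdU (G : PeriodicGraph d n) (σ : Equiv.Perm (Fin n)) :
    Polynomial G.LaurentU :=
  ∏ i, G.dispMatU i (σ i)

/-- The support `𝒜(g) ⊆ ℤ^d × ℕ` of `g ∈ ℂ[z^{±1}][λ]`: the set of pairs
`(a, b)` such that the monomial `z^a λ^b` has nonzero coefficient. -/
def suppC (g : Polynomial (LaurentC d)) : Set ((Fin d → ℤ) × ℕ) :=
  {p | (g.coeff p.2).coeff p.1 ≠ 0}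

/-- The generic support `A(f) ⊆ ℤ^d × ℕ` of `f ∈ ℂ[v,e][z^{±1}][λ]`: the set
of `(a,b)` such that the coefficient `c_{a,b}(v,e)` of `z^a λ^b` is a nonzero
polynomial in `(v,e)` (equivalently, such that `(a,b)` is in the support of the
specialization of `f` at a generic labeling). -/
def genSupp {G : PeriodicGraph d n} (f : Polynomial G.LaurentU) :
    Set ((Fin d → ℤ) × ℕ) :=
  {p | (f.coeff p.2).coeff p.1 ≠ 0}

/-- The full support `𝒜(f) ⊆ ℤ^d × ℕ × ℕ^{V,E}` of `f ∈ ℂ[v,e][z^{±1}][λ]`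
as a polynomial in all the variables `z, λ, v, e`: the set of triples
`(r₁, r₂, r₃)` such that the monomial `z^{r₁} λ^{r₂} (v,e)^{r₃}` appears in `f`
with nonzero coefficient. -/
def fullSupp {G : PeriodicGraph d n} (f : Polynomial G.LaurentU) :
    Set ((Fin d → ℤ) × ℕ × (G.VarIdx →₀ ℕ)) :=
  {r | MvPolynomial.coeff r.2.2 ((f.coeff r.2.1).coeff r.1) ≠ 0}

/-- The embedding `ℤ^d × ℕ → ℝ^{d+1}` of exponent vectors. -/
def toPt (p : (Fin d → ℤ) × ℕ) : (Fin d → ℝ) × ℝ :=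
  (fun i => (p.1 i : ℝ), (p.2 : ℝ))

/-- The generic Newton polytope `N(f) ⊆ ℝ^{d+1}` of `f ∈ ℂ[v,e][z^{±1}][λ]`:
the convex hull of the generic support. -/
def newton {G : PeriodicGraph d n} (f : Polynomial G.LaurentU) :
    Set ((Fin d → ℝ) × ℝ) :=
  convexHull ℝ (toPt '' genSupp f)

/-- The pairing `w · p` of a weight `w ∈ ℤ^{d+1}` with an exponent vector
`p ∈ ℤ^d × ℕ`. -/
def dotZ (w : (Fin d → ℤ) × ℤ) (p : (Fin d → ℤ) × ℕ) : ℤ :=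
  (∑ i, w.1 i * p.1 i) + w.2 * (p.2 : ℤ)

/-- The pairing `w · q` of a weight `w ∈ ℤ^{d+1}` with a point `q ∈ ℝ^{d+1}`. -/
def dotR (w : (Fin d → ℤ) × ℤ) (q : (Fin d → ℝ) × ℝ) : ℝ :=
  (∑ i, (w.1 i : ℝ) * q.1 i) + (w.2 : ℝ) * q.2

/-- The face `N(f)_w` of the generic Newton polytope identified by the weight
`w`: the set of points of `N(f)` on which `w · ·` is minimized. -/
def face {G : PeriodicGraph d n} (f : Polynomial G.LaurentU)
    (w : (Fin d → ℤ) × ℤ) : Set ((Fin d → ℝ) × ℝ) :=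
  {q ∈ newton f | ∀ q' ∈ newton f, dotR w q ≤ dotR w q'}

/-- A set in `ℝ^{d+1}` is vertical if it contains two points `(a,b)` and
`(a,c)` with `b ≠ c`. -/
def IsVertical (F : Set ((Fin d → ℝ) × ℝ)) : Prop :=
  ∃ (a : Fin d → ℝ) (b c : ℝ), b ≠ c ∧ (a, b) ∈ F ∧ (a, c) ∈ F

/-- A set in `ℝ^{d+1}` is a vertical segment if it is a (one-dimensional)
segment and is vertical. -/
def IsVerticalSegment (F : Set ((Fin d → ℝ) × ℝ)) : Prop :=
  (∃ p q : (Fin d → ℝ) × ℝ, p ≠ q ∧ F = segment ℝ p q) ∧ IsVertical F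

/-- `U ⊆ [n]` is a component of the fundamental domain: no edge of `Γ` joins
the `ℤ^d`-orbit of `U` to the `ℤ^d`-orbit of its complement. -/
def IsComponent (G : PeriodicGraph d n) (U : Set (Fin n)) : Prop :=
  ∀ i ∈ U, ∀ j, j ∉ U → G.edges i j = ∅

/-- A fundamental domain of `Γ` is determined by shifts `t i ∈ ℤ^d` of the
vertices of the standard fundamental domain (it is `{(i, t i) : i ∈ [n]}`).
`SupportZeroOn G t U` says that the subset `{(i, t i) : i ∈ U}` of that
fundamental domain has support `0`: every edge between the orbits of vertices
of `U` joins `(i, t i)` to `(j, t j)` with shift `a = 0`. -/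
def SupportZeroOn (G : PeriodicGraph d n) (t : Fin n → (Fin d → ℤ))
    (U : Set (Fin n)) : Prop :=
  ∀ i ∈ U, ∀ j ∈ U, ∀ a ∈ G.edges i j, a = t j - t i

/-- `Γ` has a fundamental domain of support `0`. -/
def HasSupportZeroFD (G : PeriodicGraph d n) : Prop :=
  ∃ t : Fin n → (Fin d → ℤ), G.SupportZeroOn t Set.univ

/-- `Γ` has a fundamental domain with a nonempty component of support `0`. -/
def HasSupportZeroComponent (G : PeriodicGraph d n) : Prop :=
  ∃ (t : Fin n → (Fin d → ℤ)) (U : Set (Fin n)),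
    U.Nonempty ∧ G.IsComponent U ∧ G.SupportZeroOn t U

/-- A subset of the labeling space `ℂ^{V,E}` is algebraic if it is the common
zero locus of a family of polynomials in the variables `(v,e)`. -/
def IsAlgebraicSet {ι : Type*} (S : Set (ι → ℂ)) : Prop :=
  ∃ P : Set (MvPolynomial ι ℂ), S = {x | ∀ p ∈ P, MvPolynomial.eval x p = 0}

/-- A property of labelings holds generically if it holds outside some proper
algebraic subset of the labeling space (i.e., on a nonempty Zariski-open set). -/
def Generic {ι : Type*} (P : (ι → ℂ) → Prop) : Prop :=
  ∃ S : Set (ι → ℂ), IsAlgebraicSet S ∧ S ≠ Set.univ ∧ ∀ x ∉ S, P x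

/-- `g ∈ ℂ[z^{±1}][λ]` has a linear factor in `λ`. -/
def HasLinearFactor (g : Polynomial (LaurentC d)) : Prop :=
  ∃ lam : ℂ, (Polynomial.X - Polynomial.C (algebraMap ℂ (LaurentC d) lam)) ∣ g



/-- The dispersion polynomial `D|_U(z,λ) = det (L|_U(z) - λI)` of the induced
periodic operator on the induced subgraph `Γ_U`, for `U ⊆ [n]`, at a fixed
labeling (the Floquet matrix of the induced operator is the corresponding
principal submatrix of `L(z)`). -/
def dispSub (G : PeriodicGraph d n) (x : G.Labeling) (U : Finset (Fin n)) :
    Polynomial (LaurentC d) :=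
  (Matrix.det (fun i j : {i // i ∈ U} =>
    Polynomial.C (G.floquet x i.1 j.1) - if i = j then Polynomial.X else 0))

/-- Restriction of a Laurent polynomial to the monomials satisfying a
predicate. -/
def laurFilter (p : (Fin d → ℤ) → Prop) (g : LaurentC d) : LaurentC d :=
  AddMonoidAlgebra.ofCoeff (Finsupp.filter p (g.coeff : (Fin d → ℤ) →₀ ℂ))

/-- The facial polynomial `g_w` of `g ∈ ℂ[z^{±1}][λ]`: the sum of the terms of
`g` whose exponent vectors minimize `w · ·` over the support of `g`. -/
def facialC (w : (Fin d → ℤ) × ℤ) (g : Polynomial (LaurentC d)) :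
    Polynomial (LaurentC d) :=
  ∑ b ∈ g.support,
    Polynomial.C (laurFilter
      (fun a => ∀ q ∈ suppC g, dotZ w (a, b) ≤ dotZ w q) (g.coeff b)) *
      Polynomial.X ^ b

/-- The monomial `z^a` in `ℂ[z^{±1}]`. -/
def zMon (a : Fin d → ℤ) : LaurentC d := AddMonoidAlgebra.single a 1

/-- The Sylvester matrix of two polynomials `f, g ∈ R[λ]` (with respect to
their natural degrees `s = deg f` and `t = deg g`): a `(t+s) × (t+s)` matrix
whose first `t` rows are the shifted coefficient sequences of `f` and whose
last `s` rows are the shifted coefficient sequences of `g`. -/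
def sylvester {R : Type*} [CommRing R] (f g : Polynomial R) :
    Matrix (Fin (g.natDegree + f.natDegree)) (Fin (g.natDegree + f.natDegree)) R :=
  fun r c =>
    if (r : ℕ) < g.natDegree then
      (if (r : ℕ) ≤ (c : ℕ) then f.coeff ((c : ℕ) - (r : ℕ)) else 0)
    else
      (if ((r : ℕ) - g.natDegree) ≤ (c : ℕ) then
        g.coeff ((c : ℕ) - ((r : ℕ) - g.natDegree)) else 0)

/-- The resultant of two polynomials in `λ`: the determinant of their
Sylvester matrix. -/
def resultant {R : Type*} [CommRing R] (f g : Polynomial R) : R :=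
  (sylvester f g).det

/-- The simplified quotient graph `S(Γ/ℤ^d)`: the finite simple graph on the
fundamental domain `[n]` with an edge between `i ≠ j` whenever some edge of `Γ`
joins the orbits of `i` and `j`. -/
def simpleQuotient (G : PeriodicGraph d n) : SimpleGraph (Fin n) where
  Adj i j := i ≠ j ∧ (G.edges i j).Nonempty
  symm := ⟨by
    rintro i j ⟨hij, a, ha⟩
    exact ⟨hij.symm, ⟨-a, (G.symm i j a).mp ha⟩⟩⟩
  loopless := ⟨fun i h => h.1 rfl⟩

/-- A property of potentials `(v_1,…,v_n) ∈ ℂ^n` holds generically if it holds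
outside a proper algebraic subset of `ℂ^n`. -/
def GenericPot (P : (Fin n → ℂ) → Prop) : Prop :=
  ∃ S : Set (Fin n → ℂ), IsAlgebraicSet S ∧ S ≠ Set.univ ∧ ∀ x ∉ S, P x

end PeriodicGraph

/-!
Expanding the determinant, `D = ∑_τ sign τ · τD`. After the substitution `λ ↦ -λ` every entry
of `L(z) - λI` has coefficients in `ℕ`, so the coefficient of a monomial `z^a λ^b (v,e)^m` in `τD`
is `(-1)^b N_τ` with `N_τ ∈ ℕ`. If `N_τ ≠ 0`, the non-loop edge variables in `m` are exactly the
edges `{i, τ i}` at the points moved by `τ` (potentials, `λ` and loops only occur at fixed points).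
So every `τ` contributing to a monomial of `σD` has the same undirected cycle graph as `σ`; it
differs from `σ` only by reversing some cycles, hence has the same sign, and the contributions
`sign σ · (-1)^b N_τ` to the coefficient in `D` cannot cancel.
-/

def offDiagEdge {α : Type*} [DecidableEq α] (i j : α) : Multiset (Sym2 α) :=
  if i = j then 0 else {s(i, j)}

theorem offDiagEdge_comm {α : Type*} [DecidableEq α] (i j : α) :
    offDiagEdge i j = offDiagEdge j i := by
  simp only [offDiagEdge, eq_comm (a := i), Sym2.eq_swap]

namespace Equiv.Perm

variable {α : Type*} {σ τ : Perm α}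

def edgeSet (σ : Perm α) : Set (Sym2 α) := {e | ∃ i, σ i ≠ i ∧ s(i, σ i) = e}

theorem mk_mem_edgeSet_iff {x y : α} :
    s(x, y) ∈ σ.edgeSet ↔ x ≠ y ∧ (σ x = y ∨ σ y = x) := by
  constructor
  · rintro ⟨i, hi, he⟩
    rcases Sym2.eq_iff.mp he with ⟨rfl, rfl⟩ | ⟨rfl, rfl⟩
    · exact ⟨hi.symm, Or.inl rfl⟩
    · exact ⟨hi, Or.inr rfl⟩
  · rintro ⟨hxy, rfl | rfl⟩
    · exact ⟨x, Ne.symm hxy, rfl⟩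
    · exact ⟨y, hxy, Sym2.eq_swap⟩

theorem edgeSet_inv (σ : Perm α) : σ⁻¹.edgeSet = σ.edgeSet := by
  refine Set.ext (Sym2.ind fun x y => ?_)
  simp only [mk_mem_edgeSet_iff, inv_eq_iff_eq, eq_comm (a := x), eq_comm (a := y)]
  tauto

theorem apply_eq_or_eq_inv_apply_of_edgeSet_eq (h : σ.edgeSet = τ.edgeSet) (x : α) :
    τ x = σ x ∨ τ x = σ⁻¹ x := by
  have of_moved : ∀ {σ τ : Perm α}, σ.edgeSet = τ.edgeSet → τ x ≠ x →
      τ x = σ x ∨ τ x = σ⁻¹ x := by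
    intro σ τ h hx
    have : s(x, τ x) ∈ σ.edgeSet := h ▸ mk_mem_edgeSet_iff.mpr ⟨Ne.symm hx, Or.inl rfl⟩
    rcases (mk_mem_edgeSet_iff.mp this).2 with h' | h'
    · exact Or.inl h'.symm
    · exact Or.inr (eq_inv_iff_eq.mpr h')
  by_cases hτ : τ x = x
  · by_cases hσ : σ x = x
    · exact Or.inl (hτ.trans hσ.symm)
    · have hτ' : τ⁻¹ x = x := inv_eq_iff_eq.mpr hτ.symm
      exact absurd ((of_moved h.symm hσ).elim (·.trans hτ) (·.trans hτ')) hσ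
  · exact of_moved h hτ

theorem apply_apply_eq_of_edgeSet_eq (h : σ.edgeSet = τ.edgeSet) {x : α} (hx : τ x = σ x) :
    τ (σ x) = σ (σ x) := by
  rcases apply_eq_or_eq_inv_apply_of_edgeSet_eq h (σ x) with h' | h'
  · exact h'
  · rw [inv_eq_iff_eq.mpr rfl] at h'
    rcases apply_eq_or_eq_inv_apply_of_edgeSet_eq h.symm (σ x) with h'' | h''
    · rw [h'', h']
    · rw [h'', h', eq_inv_iff_eq, hx]

theorem pow_apply_eq_of_edgeSet_eq (h : σ.edgeSet = τ.edgeSet) {x : α} (hx : τ x = σ x)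
    (k : ℕ) :
    (τ ^ k) x = (σ ^ k) x ∧ τ ((σ ^ k) x) = σ ((σ ^ k) x) := by
  induction k with
  | zero => exact ⟨rfl, hx⟩
  | succ k ih =>
    rw [pow_succ', pow_succ', mul_apply, mul_apply, ih.1, ih.2]
    exact ⟨rfl, apply_apply_eq_of_edgeSet_eq h ih.2⟩

theorem sameCycle_iff_of_edgeSet_eq [Finite α] (h : σ.edgeSet = τ.edgeSet) {x : α}
    (hx : τ x = σ x) (y : α) :
    τ.SameCycle x y ↔ σ.SameCycle x y := by
  constructor <;> intro hy
  · obtain ⟨k, -, rfl⟩ := hy.exists_pow_eq'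
    rw [(pow_apply_eq_of_edgeSet_eq h hx k).1]
    exact ⟨k, by simp⟩
  · obtain ⟨k, -, rfl⟩ := hy.exists_pow_eq'
    rw [← (pow_apply_eq_of_edgeSet_eq h hx k).1]
    exact ⟨k, by simp⟩

variable [Fintype α] [DecidableEq α]

theorem cycleOf_eq_of_edgeSet_eq (h : σ.edgeSet = τ.edgeSet) {x : α} (hx : τ x = σ x) :
    τ.cycleOf x = σ.cycleOf x := by
  ext y
  simp only [cycleOf_apply, sameCycle_iff_of_edgeSet_eq h hx]
  split_ifs with hy
  · obtain ⟨k, -, rfl⟩ := hy.exists_pow_eq'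
    exact (pow_apply_eq_of_edgeSet_eq h hx k).2
  · rfl

theorem cycleOf_eq_or_eq_inv_of_edgeSet_eq (h : σ.edgeSet = τ.edgeSet) (x : α) :
    τ.cycleOf x = σ.cycleOf x ∨ τ.cycleOf x = (σ.cycleOf x)⁻¹ := by
  rcases apply_eq_or_eq_inv_apply_of_edgeSet_eq h x with hx | hx
  · exact Or.inl (cycleOf_eq_of_edgeSet_eq h hx)
  · rw [cycleOf_inv]
    exact Or.inr (by convert cycleOf_eq_of_edgeSet_eq ((edgeSet_inv σ).trans h) hx)

theorem mul_cycleOf_inv_apply (σ : Perm α) (x y : α) :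
    (σ * (σ.cycleOf x)⁻¹) y = if σ.SameCycle x y then y else σ y := by
  rw [mul_apply, cycleOf_inv, cycleOf_apply]
  simp only [sameCycle_inv]
  split_ifs <;> simp

theorem edgeSet_mul_cycleOf_inv (σ : Perm α) (x : α) :
    (σ * (σ.cycleOf x)⁻¹).edgeSet = σ.edgeSet \ (σ.cycleOf x).edgeSet := by
  ext e
  simp only [edgeSet, mul_cycleOf_inv_apply, cycleOf_apply, Set.mem_sdiff, Set.mem_ofPred_eq]
  constructor
  · rintro ⟨i, hi, rfl⟩
    have hxi : ¬σ.SameCycle x i := fun h => by simp [h] at hi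
    simp only [hxi, if_false] at hi ⊢
    refine ⟨⟨i, hi, rfl⟩, ?_⟩
    rintro ⟨j, hj, he⟩
    have hxj : σ.SameCycle x j := by by_contra h; simp [h] at hj
    simp only [hxj, if_true] at he
    rcases Sym2.eq_iff.mp he with ⟨rfl, -⟩ | ⟨-, rfl⟩
    · exact hxi hxj
    · exact hxi (sameCycle_apply_right.mpr hxj)
  · rintro ⟨⟨i, hi, rfl⟩, hne⟩
    have hxi : ¬σ.SameCycle x i := fun h => hne ⟨i, by simpa [h] using hi, by simp [h]⟩
    exact ⟨i, by simpa [hxi] using hi, by simp [hxi]⟩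

theorem card_support_mul_cycleOf_inv_lt {x : α} (hx : σ x ≠ x) :
    (σ * (σ.cycleOf x)⁻¹).support.card < σ.support.card := by
  refine Finset.card_lt_card ⟨fun y hy => ?_, fun hsub => ?_⟩
  · rw [mem_support, mul_cycleOf_inv_apply] at hy
    split_ifs at hy
    exacts [absurd rfl hy, mem_support.mpr hy]
  · have := hsub (mem_support.mpr hx)
    simp only [mem_support, mul_cycleOf_inv_apply, SameCycle.refl, if_true] at this
    exact this rfl

theorem sign_eq_of_edgeSet_eq (h : σ.edgeSet = τ.edgeSet) : sign σ = sign τ := by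
  induction hk : σ.support.card using Nat.strong_induction_on generalizing σ τ with
  | _ k ih =>
  by_cases hσ : ∀ x, σ x = x
  · have hτ : τ = σ := by
      ext x
      rcases apply_eq_or_eq_inv_apply_of_edgeSet_eq h x with hx | hx
      · exact hx
      · rw [hx, inv_eq_iff_eq, hσ, hσ]
    rw [hτ]
  obtain ⟨x, hx⟩ := not_forall.mp hσ
  have hcycle : sign (τ.cycleOf x) = sign (σ.cycleOf x) := by
    rcases cycleOf_eq_or_eq_inv_of_edgeSet_eq h x with hc | hc <;> simp [hc]
  have hrest : (σ * (σ.cycleOf x)⁻¹).edgeSet = (τ * (τ.cycleOf x)⁻¹).edgeSet := by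
    rw [edgeSet_mul_cycleOf_inv, edgeSet_mul_cycleOf_inv, ← h]
    rcases cycleOf_eq_or_eq_inv_of_edgeSet_eq h x with hc | hc <;> simp [hc, edgeSet_inv]
  have hcard : (σ * (σ.cycleOf x)⁻¹).support.card < k := hk ▸ card_support_mul_cycleOf_inv_lt hx
  calc sign σ = sign (σ * (σ.cycleOf x)⁻¹) * sign (σ.cycleOf x) := by
        rw [← map_mul, inv_mul_cancel_right]
    _ = sign (τ * (τ.cycleOf x)⁻¹) * sign (τ.cycleOf x) := by
      rw [ih _ hcard hrest rfl, hcycle]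
    _ = sign τ := by rw [← map_mul, inv_mul_cancel_right]

def edgeMultiset (σ : Perm α) : Multiset (Sym2 α) := ∑ i, offDiagEdge i (σ i)

theorem mem_edgeMultiset {σ : Perm α} {e : Sym2 α} : e ∈ σ.edgeMultiset ↔ e ∈ σ.edgeSet := by
  simp only [edgeMultiset, Multiset.mem_sum, Finset.mem_univ, true_and, offDiagEdge, edgeSet,
    Set.mem_ofPred_eq, ne_comm (a := σ _)]
  refine exists_congr fun i => ?_
  split_ifs with h
  · exact iff_of_false (Multiset.notMem_zero e) fun h' => h'.1 h
  · rw [Multiset.mem_singleton, eq_comm]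
    exact (and_iff_right h).symm

end Equiv.Perm

theorem sum_units_mul_natCast_ne_zero {ι R : Type*} [Fintype ι] [Ring R] [CharZero R]
    (s : ι → ℤˣ) (N : ι → ℕ) {i₀ : ι} (h₀ : N i₀ ≠ 0) (hs : ∀ i, N i ≠ 0 → s i = s i₀) :
    ∑ i, ((s i : ℤ) : R) * N i ≠ 0 := by
  have hsum : ∑ i, ((s i : ℤ) : R) * N i = ((s i₀ : ℤ) : R) * ((∑ i, N i : ℕ) : R) := by
    rw [Nat.cast_sum, Finset.mul_sum]
    refine Finset.sum_congr rfl fun i _ => ?_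
    by_cases h : N i = 0
    · simp [h]
    · rw [hs i h]
  have hunit : IsUnit ((s i₀ : ℤ) : R) := (s i₀).isUnit.map (Int.castRingHom R)
  rw [hsum, Ne, hunit.mul_right_eq_zero, Nat.cast_eq_zero]
  exact fun h => h₀ (Finset.sum_eq_zero_iff.mp h i₀ (Finset.mem_univ _))

namespace Polynomial

theorem coeff_comp_neg_X {R : Type*} [CommRing R] (p : R[X]) (b : ℕ) :
    (p.comp (-X)).coeff b = (-1 : ℤ) ^ b • p.coeff b := by
  induction p using Polynomial.induction_on' with
  | add p q hp hq => simp [add_comp, hp, hq]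
  | monomial k a =>
    rw [← C_mul_X_pow_eq_monomial, mul_comp, C_comp, X_pow_comp, neg_pow, ← mul_assoc,
      ← C_1, ← C_neg, ← C_pow, ← C_mul, coeff_C_mul_X_pow, coeff_C_mul_X_pow]
    split_ifs with h
    · subst h; simp [mul_comm]
    · simp

end Polynomial

section EvalAtOne

open Polynomial

variable {ι M : Type*} [AddCommMonoid M]

def evalAtOne : Polynomial (AddMonoidAlgebra (MvPolynomial ι ℕ) M) →+* MvPolynomial ι ℕ :=
  eval₂RingHom (AddMonoidAlgebra.lift (MvPolynomial ι ℕ) (MvPolynomial ι ℕ) M 1).toRingHom 1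

theorem coeff_evalAtOne_ne_zero {F : Polynomial (AddMonoidAlgebra (MvPolynomial ι ℕ) M)}
    {b : ℕ} {α : M} {m : ι →₀ ℕ} (h : ((F.coeff b).coeff α).coeff m ≠ 0) :
    (evalAtOne F).coeff m ≠ 0 := by
  have hb : b ∈ F.support := by
    rw [mem_support_iff]; rintro hb; simp [hb] at h
  have hα : α ∈ (F.coeff b).coeff.support := by
    rw [Finsupp.mem_support_iff]; rintro hα; simp [hα] at h
  simp only [evalAtOne, coe_eval₂RingHom, eval₂_eq_sum, one_pow, mul_one, Polynomial.sum,
    AlgHom.toRingHom_eq_coe, RingHom.coe_coe, AddMonoidAlgebra.lift_apply, smul_eq_mul,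
    MonoidHom.one_apply, Finsupp.sum, MvPolynomial.coeff_sum, ne_eq, Finset.sum_eq_zero_iff,
    not_forall]
  exact ⟨b, hb, α, hα, by simpa using h⟩

end EvalAtOne

namespace PeriodicGraph

open Polynomial

variable {d n : ℕ} (G : PeriodicGraph d n)

abbrev LaurentNat : Type := AddMonoidAlgebra (MvPolynomial G.VarIdx ℕ) (Fin d → ℤ)

def floquetNat : Matrix (Fin n) (Fin n) G.LaurentNat := fun i j =>
  (if i = j then AddMonoidAlgebra.single 0 (MvPolynomial.X (Sum.inl i)) else 0) +
    ∑ a ∈ (G.edges i j).attach,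
      AddMonoidAlgebra.single a.1 (MvPolynomial.X (G.edgeVar i j a.1 a.2))

def dispMatNat : Matrix (Fin n) (Fin n) (Polynomial G.LaurentNat) := fun i j =>
  C (G.floquetNat i j) + if i = j then X else 0

def permProdNat (τ : Equiv.Perm (Fin n)) : Polynomial G.LaurentNat :=
  ∏ i, G.dispMatNat i (τ i)

def castLaurent : G.LaurentNat →+* G.LaurentU :=
  AddMonoidAlgebra.mapRingHom _ (MvPolynomial.map (Nat.castRingHom ℂ))

theorem castLaurent_floquetNat (i j : Fin n) :
    G.castLaurent (G.floquetNat i j) = G.floquetU i j := by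
  simp [castLaurent, floquetNat, floquetU, apply_ite]

theorem dispMatU_eq (i j : Fin n) :
    G.dispMatU i j = ((G.dispMatNat i j).map G.castLaurent).comp (-X) := by
  simp only [dispMatU, dispMatNat]
  split_ifs <;>
    simp only [Polynomial.map_add, map_C, map_X, add_zero, add_comp, C_comp, X_comp,
      castLaurent_floquetNat] <;>
    ring

theorem permProdU_eq (τ : Equiv.Perm (Fin n)) :
    G.permProdU τ = ((G.permProdNat τ).map G.castLaurent).comp (-X) := by
  simp [permProdU, permProdNat, dispMatU_eq, Polynomial.map_prod, prod_comp]

theorem coeff_permProdU (τ : Equiv.Perm (Fin n)) (b : ℕ) (α : Fin d → ℤ) (m : G.VarIdx →₀ ℕ) :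
    (((G.permProdU τ).coeff b).coeff α).coeff m =
      (-1) ^ b * ((((G.permProdNat τ).coeff b).coeff α).coeff m : ℕ) := by
  rw [permProdU_eq, coeff_comp_neg_X, show (-1 : ℂ) ^ b = ((-1 : ℤ) ^ b : ℤ) by push_cast; rfl]
  rcases neg_one_pow_eq_or ℤ b with h | h <;> simp [h, castLaurent, MvPolynomial.coeff_map]

def varWeight : G.VarIdx → Multiset (Sym2 (Fin n)) :=
  Sum.elim 0 <| Quotient.lift (fun x : G.DirEdge => offDiagEdge x.1.1 x.1.2.1) <| by
    rintro x y (rfl | rfl)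
    · rfl
    · exact offDiagEdge_comm _ _

theorem isWeightedHomogeneous_evalAtOne_dispMatNat (i j : Fin n) :
    (evalAtOne (G.dispMatNat i j)).IsWeightedHomogeneous G.varWeight (offDiagEdge i j) := by
  have hdiag : i = j → offDiagEdge i j = 0 := fun h => if_pos h
  simp only [evalAtOne, dispMatNat, floquetNat, coe_eval₂RingHom, eval₂_C, map_add, map_sum,
    apply_ite (eval₂ _ _), eval₂_X, eval₂_zero, AlgHom.toRingHom_eq_coe, RingHom.coe_coe,
    AddMonoidAlgebra.lift_single, MonoidHom.one_apply, smul_eq_mul, mul_one]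
  refine .add (.add ?_ (.sum _ _ _ fun a _ => MvPolynomial.isWeightedHomogeneous_X ℕ _ _)) ?_
  · split_ifs with h
    · rw [AddMonoidAlgebra.lift_single, MonoidHom.one_apply, smul_eq_mul, mul_one, hdiag h]
      exact MvPolynomial.isWeightedHomogeneous_X ℕ _ _
    · rw [map_zero]; exact MvPolynomial.isWeightedHomogeneous_zero _ _ _
  · split_ifs with h
    · rw [hdiag h]; exact MvPolynomial.isWeightedHomogeneous_one _ _
    · exact MvPolynomial.isWeightedHomogeneous_zero _ _ _

theorem isWeightedHomogeneous_evalAtOne_permProdNat (τ : Equiv.Perm (Fin n)) :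
    (evalAtOne (G.permProdNat τ)).IsWeightedHomogeneous G.varWeight τ.edgeMultiset := by
  rw [permProdNat, map_prod]
  exact .prod _ _ _ fun i _ => G.isWeightedHomogeneous_evalAtOne_dispMatNat i (τ i)

theorem edgeSet_eq_of_coeff_permProdNat_ne_zero {σ τ : Equiv.Perm (Fin n)} {b b' : ℕ}
    {α α' : Fin d → ℤ} {m : G.VarIdx →₀ ℕ}
    (hσ : (((G.permProdNat σ).coeff b).coeff α).coeff m ≠ 0)
    (hτ : (((G.permProdNat τ).coeff b').coeff α').coeff m ≠ 0) : σ.edgeSet = τ.edgeSet := by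
  have hw : σ.edgeMultiset = τ.edgeMultiset :=
    (G.isWeightedHomogeneous_evalAtOne_permProdNat σ (coeff_evalAtOne_ne_zero hσ)).symm.trans
      (G.isWeightedHomogeneous_evalAtOne_permProdNat τ (coeff_evalAtOne_ne_zero hτ))
  ext e
  rw [← Equiv.Perm.mem_edgeMultiset, hw, Equiv.Perm.mem_edgeMultiset]

theorem coeff_dispU (b : ℕ) (α : Fin d → ℤ) (m : G.VarIdx →₀ ℕ) :
    ((G.dispU.coeff b).coeff α).coeff m =
      ∑ τ, ((Equiv.Perm.sign τ : ℤ) : ℂ) * (((G.permProdU τ).coeff b).coeff α).coeff m := by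
  rw [dispU, ← Matrix.det_transpose, Matrix.det_apply]
  simp only [Matrix.transpose_apply, Units.smul_def, finsetSum_coeff, coeff_smul,
    AddMonoidAlgebra.coeff_sum, AddMonoidAlgebra.coeff_smul, Finsupp.coe_finsetSum,
    Finsupp.coe_smul, Finset.sum_apply, Pi.smul_apply, MvPolynomial.coeff_sum,
    MvPolynomial.coeff_smul, permProdU]
  simp only [zsmul_eq_mul]

end PeriodicGraph

open PeriodicGraph in
/-- For every permutation `σ` of `[n]`, the generic support
of `σD(z,λ)` is contained in the generic support of `D(z,λ)`. -/
theorem genSupp_permProd_subset {d n : ℕ} (G : PeriodicGraph d n)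
    (σ : Equiv.Perm (Fin n)) :
    genSupp (G.permProdU σ) ⊆ genSupp G.dispU := by
  rintro ⟨α, b⟩ hσ
  obtain ⟨m, hm⟩ := MvPolynomial.ne_zero_iff.mp hσ
  set N : Equiv.Perm (Fin n) → ℕ := fun τ => (((G.permProdNat τ).coeff b).coeff α).coeff m
  have hNσ : N σ ≠ 0 := fun h => hm (by rw [coeff_permProdU]; simp [N, h])
  have hsign : ∀ τ, N τ ≠ 0 → Equiv.Perm.sign τ = Equiv.Perm.sign σ := fun τ hτ =>
    Equiv.Perm.sign_eq_of_edgeSet_eq (G.edgeSet_eq_of_coeff_permProdNat_ne_zero hτ hNσ)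
  refine MvPolynomial.ne_zero_iff.mpr ⟨m, ?_⟩
  simp only [coeff_dispU, coeff_permProdU, mul_left_comm _ ((-1 : ℂ) ^ b), ← Finset.mul_sum]
  exact mul_ne_zero (pow_ne_zero _ (neg_ne_zero.mpr one_ne_zero))
    (sum_units_mul_natCast_ne_zero _ N hNσ hsign)
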